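/- Let {a_ν} be a non-negative decreasing sequence, α > 0, λ ∈ ℝ, and p ≥ 1. Then there exist constants C_1, C_2 > 0 depending only on α, λ, p such that for every positive integer n, C_1 ∑_{μ=1}^{n} μ^{-α-1} (a_μ μ^{λ+1})^p ≤ ∑_{μ=1}^{n} μ^{-α-1} (∑_{ν=1}^{μ} a_ν ν^λ)^p ≤ C_2 ∑_{μ=1}^{n} μ^{-α-1} (a_μ μ^{λ+1})^p. -/

import Mathlib

/-!
Lower bound: since `a` is decreasing,
`∑_{ν ≤ μ} a_ν ν^λ ≥ a_μ ∑_{ν ≤ μ} ν^λ ≥ a_μ μ^(λ+1) / (1 + |λ|)`.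

Upper bound: this is Hardy's inequality for `b_ν = a_ν ν^λ`.
Hölder's inequality with weights `ν^(e-1)`, `e = α / (α + p)`, gives
`(∑_{ν ≤ μ} b_ν)^p ≲ μ^(e(p-1)) ∑_{ν ≤ μ} ν^((1-e)(p-1)) b_ν^p`; exchanging the order of summation
leaves the tails `∑_{μ ≥ ν} μ^(-β-1) ≲ ν^(-β)`, where `β = α - e(p-1) > 0`.

All power sums are estimated by telescoping the Bernoulli-type comparisons between `(x-1)^r`
and `x^r - r x^(r-1)`.
-/

open Finset Real

theorem one_add_mul_self_le_rpow_one_add_of_nonpos {s p : ℝ} (hs : -1 < s) (hp : p ≤ 0) :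
    1 + p * s ≤ (1 + s) ^ p :=
  calc 1 + p * s ≤ exp (s * p) := by linarith [add_one_le_exp (s * p)]
    _ = exp s ^ p := exp_mul s p
    _ ≤ (1 + s) ^ p := rpow_le_rpow_of_nonpos (by linarith) (by linarith [add_one_le_exp s]) hp

section Steps

variable {x r : ℝ}

lemma rpow_sub_one_eq_mul_rpow (hx : 1 ≤ x) : (x - 1) ^ r = x ^ r * (1 + -x⁻¹) ^ r := by
  have hx0 : 0 < x := by linarith
  rw [← mul_rpow hx0.le (by linarith [inv_le_one_of_one_le₀ hx])]
  congr 1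
  field_simp
  ring

lemma rpow_sub_mul_rpow_sub_one_eq (hx : 0 < x) :
    x ^ r - r * x ^ (r - 1) = x ^ r * (1 + r * -x⁻¹) := by
  rw [rpow_sub_one hx.ne']
  ring

theorem rpow_sub_one_le (hx : 1 ≤ x) (hr₀ : 0 ≤ r) (hr₁ : r ≤ 1) :
    (x - 1) ^ r ≤ x ^ r - r * x ^ (r - 1) := by
  rw [rpow_sub_one_eq_mul_rpow hx, rpow_sub_mul_rpow_sub_one_eq (by linarith)]
  gcongr
  exact rpow_one_add_le_one_add_mul_self (by linarith [inv_le_one_of_one_le₀ hx]) hr₀ hr₁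

theorem le_rpow_sub_one (hx : 1 ≤ x) (hr : 1 ≤ r) :
    x ^ r - r * x ^ (r - 1) ≤ (x - 1) ^ r := by
  rw [rpow_sub_one_eq_mul_rpow hx, rpow_sub_mul_rpow_sub_one_eq (by linarith)]
  gcongr
  exact one_add_mul_self_le_rpow_one_add (by linarith [inv_le_one_of_one_le₀ hx]) hr

theorem le_rpow_sub_one_of_nonpos (hx : 1 < x) (hr : r ≤ 0) :
    x ^ r - r * x ^ (r - 1) ≤ (x - 1) ^ r := by
  rw [rpow_sub_one_eq_mul_rpow hx.le, rpow_sub_mul_rpow_sub_one_eq (by linarith)]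
  gcongr
  exact one_add_mul_self_le_rpow_one_add_of_nonpos (by linarith [inv_lt_one_of_one_lt₀ hx]) hr

end Steps

theorem sum_Icc_rpow_sub_one_le {e : ℝ} (he₀ : 0 < e) (he₁ : e ≤ 1) (μ : ℕ) :
    ∑ ν ∈ Icc 1 μ, (ν : ℝ) ^ (e - 1) ≤ (μ : ℝ) ^ e / e := by
  induction μ with
  | zero => simp [zero_rpow he₀.ne']
  | succ m ih =>
    have step := rpow_sub_one_le (x := m + 1) (by simp) he₀.le he₁
    rw [add_sub_cancel_right] at step
    rw [sum_Icc_succ_top (by omega), Nat.cast_succ, le_div_iff₀ he₀]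
    rw [le_div_iff₀ he₀] at ih
    linarith

theorem rpow_le_mul_sum_Icc_rpow_sub_one {r : ℝ} (hr : 1 ≤ r) (μ : ℕ) :
    (μ : ℝ) ^ r ≤ r * ∑ ν ∈ Icc 1 μ, (ν : ℝ) ^ (r - 1) := by
  induction μ with
  | zero => simp [zero_rpow (by positivity : r ≠ 0)]
  | succ m ih =>
    have step := le_rpow_sub_one (x := m + 1) (by simp) hr
    rw [add_sub_cancel_right] at step
    rw [sum_Icc_succ_top (by omega), Nat.cast_succ]
    linarith

theorem sum_Ioc_rpow_neg_sub_one_le {β : ℝ} (hβ : 0 < β) {ν : ℕ} (hν : 1 ≤ ν) (n : ℕ) :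
    ∑ μ ∈ Ioc ν n, (μ : ℝ) ^ (-β - 1) ≤ (ν : ℝ) ^ (-β) / β := by
  suffices h : ∀ m, ν ≤ m →
      ∑ μ ∈ Ioc ν m, (μ : ℝ) ^ (-β - 1) ≤ ((ν : ℝ) ^ (-β) - (m : ℝ) ^ (-β)) / β by
    rcases le_total ν n with hνn | hnν
    · exact (h n hνn).trans (by gcongr; exact sub_le_self _ (by positivity))
    · rw [Ioc_eq_empty_of_le hnν, sum_empty]
      positivity
  intro m hm
  induction m, hm using Nat.le_induction with
  | base => simp
  | succ k hk ih =>
    have step := le_rpow_sub_one_of_nonpos (x := k + 1) (r := -β) (by norm_cast; omega)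
      (by linarith)
    rw [add_sub_cancel_right] at step
    rw [sum_Ioc_succ_top hk, Nat.cast_succ, le_div_iff₀ hβ]
    rw [le_div_iff₀ hβ] at ih
    linarith

theorem sum_Icc_rpow_neg_sub_one_le {β : ℝ} (hβ : 0 < β) {ν : ℕ} (hν : 1 ≤ ν) (n : ℕ) :
    ∑ μ ∈ Icc ν n, (μ : ℝ) ^ (-β - 1) ≤ (1 + 1 / β) * (ν : ℝ) ^ (-β) := by
  rcases lt_or_ge n ν with hnν | hνn
  · rw [Icc_eq_empty_of_lt hnν, sum_empty]
    positivity
  rw [Icc_eq_cons_Ioc hνn, sum_cons]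
  calc (ν : ℝ) ^ (-β - 1) + ∑ μ ∈ Ioc ν n, (μ : ℝ) ^ (-β - 1)
      ≤ (ν : ℝ) ^ (-β) + (ν : ℝ) ^ (-β) / β :=
        add_le_add (rpow_le_rpow_of_exponent_le (by exact_mod_cast hν) (by linarith))
          (sum_Ioc_rpow_neg_sub_one_le hβ hν n)
    _ = (1 + 1 / β) * (ν : ℝ) ^ (-β) := by ring

theorem rpow_add_one_le_mul_sum_Icc_rpow (lam : ℝ) {μ : ℕ} (hμ : 1 ≤ μ) :
    (μ : ℝ) ^ (lam + 1) ≤ (1 + |lam|) * ∑ ν ∈ Icc 1 μ, (ν : ℝ) ^ lam := by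
  rcases le_or_gt lam 0 with hlam | hlam
  · have hμ₀ : (0 : ℝ) < μ := by exact_mod_cast hμ
    calc (μ : ℝ) ^ (lam + 1) = ∑ _ν ∈ Icc 1 μ, (μ : ℝ) ^ lam := by
          rw [sum_const, Nat.card_Icc, add_tsub_cancel_right, nsmul_eq_mul, rpow_add_one hμ₀.ne',
            mul_comm]
      _ ≤ ∑ ν ∈ Icc 1 μ, (ν : ℝ) ^ lam := by
          refine sum_le_sum fun ν hν => rpow_le_rpow_of_nonpos ?_ ?_ hlam
          · exact_mod_cast (mem_Icc.1 hν).1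
          · exact_mod_cast (mem_Icc.1 hν).2
      _ ≤ (1 + |lam|) * ∑ ν ∈ Icc 1 μ, (ν : ℝ) ^ lam :=
          le_mul_of_one_le_left (by positivity) (by linarith [abs_nonneg lam])
  · simpa [abs_of_pos hlam, add_comm 1 lam] using
      rpow_le_mul_sum_Icc_rpow_sub_one (r := lam + 1) (by linarith) μ

theorem mul_rpow_add_one_le_mul_sum_Icc_of_antitone {a : ℕ → ℝ} (ha : ∀ ν, 0 ≤ a ν)
    (hanti : Antitone a) (lam : ℝ) {μ : ℕ} (hμ : 1 ≤ μ) :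
    a μ * (μ : ℝ) ^ (lam + 1) ≤ (1 + |lam|) * ∑ ν ∈ Icc 1 μ, a ν * (ν : ℝ) ^ lam :=
  calc a μ * (μ : ℝ) ^ (lam + 1) ≤ a μ * ((1 + |lam|) * ∑ ν ∈ Icc 1 μ, (ν : ℝ) ^ lam) :=
        mul_le_mul_of_nonneg_left (rpow_add_one_le_mul_sum_Icc_rpow lam hμ) (ha μ)
    _ = (1 + |lam|) * ∑ ν ∈ Icc 1 μ, a μ * (ν : ℝ) ^ lam := by rw [mul_left_comm, mul_sum]
    _ ≤ (1 + |lam|) * ∑ ν ∈ Icc 1 μ, a ν * (ν : ℝ) ^ lam := by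
        gcongr with ν hν
        exact hanti (mem_Icc.1 hν).2

theorem reverse_hardy_inequality {a : ℕ → ℝ} (ha : ∀ ν, 0 ≤ a ν) (hanti : Antitone a)
    (α lam : ℝ) {p : ℝ} (hp : 0 ≤ p) (n : ℕ) :
    (1 + |lam|) ^ (-p) * ∑ μ ∈ Icc 1 n, (μ : ℝ) ^ (-α - 1) * (a μ * (μ : ℝ) ^ (lam + 1)) ^ p ≤
      ∑ μ ∈ Icc 1 n, (μ : ℝ) ^ (-α - 1) * (∑ ν ∈ Icc 1 μ, a ν * (ν : ℝ) ^ lam) ^ p := by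
  rw [mul_sum]
  refine sum_le_sum fun μ hμ => ?_
  have hc : 0 < 1 + |lam| := by positivity
  have key := mul_rpow_add_one_le_mul_sum_Icc_of_antitone ha hanti lam (mem_Icc.1 hμ).1
  calc (1 + |lam|) ^ (-p) * ((μ : ℝ) ^ (-α - 1) * (a μ * (μ : ℝ) ^ (lam + 1)) ^ p)
      = (μ : ℝ) ^ (-α - 1) * ((1 + |lam|)⁻¹ * (a μ * (μ : ℝ) ^ (lam + 1))) ^ p := by
        rw [mul_rpow (by positivity) (mul_nonneg (ha μ) (by positivity)), rpow_neg hc.le,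
          inv_rpow hc.le]
        ring
    _ ≤ (μ : ℝ) ^ (-α - 1) * (∑ ν ∈ Icc 1 μ, a ν * (ν : ℝ) ^ lam) ^ p := by
        gcongr
        · exact mul_nonneg (by positivity) (mul_nonneg (ha μ) (by positivity))
        · rwa [inv_mul_le_iff₀ hc]

theorem rpow_inner_le_weight_mul_Lp_of_nonneg {ι : Type*} (s : Finset ι) {p : ℝ} (hp : 1 ≤ p)
    (w f : ι → ℝ) (hw : ∀ i, 0 ≤ w i) (hf : ∀ i, 0 ≤ f i) :
    (∑ i ∈ s, w i * f i) ^ p ≤ (∑ i ∈ s, w i) ^ (p - 1) * ∑ i ∈ s, w i * f i ^ p := by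
  have hW : 0 ≤ ∑ i ∈ s, w i := sum_nonneg fun i _ => hw i
  have hS : 0 ≤ ∑ i ∈ s, w i * f i ^ p :=
    sum_nonneg fun i _ => mul_nonneg (hw i) (rpow_nonneg (hf i) p)
  calc (∑ i ∈ s, w i * f i) ^ p
      ≤ ((∑ i ∈ s, w i) ^ (1 - p⁻¹) * (∑ i ∈ s, w i * f i ^ p) ^ p⁻¹) ^ p :=
        rpow_le_rpow (sum_nonneg fun i _ => mul_nonneg (hw i) (hf i))
          (inner_le_weight_mul_Lp_of_nonneg s hp w f hw hf) (by linarith)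
    _ = (∑ i ∈ s, w i) ^ (p - 1) * ∑ i ∈ s, w i * f i ^ p := by
        rw [mul_rpow (by positivity) (by positivity), ← rpow_mul hW, ← rpow_mul hS,
          inv_mul_cancel₀ (by positivity), rpow_one]
        congr 2
        field_simp

theorem rpow_sum_Icc_le {e p : ℝ} (he₀ : 0 < e) (he₁ : e ≤ 1) (hp : 1 ≤ p) {b : ℕ → ℝ}
    (hb : ∀ ν, 0 ≤ b ν) (μ : ℕ) :
    (∑ ν ∈ Icc 1 μ, b ν) ^ p ≤
      ((μ : ℝ) ^ e / e) ^ (p - 1) * ∑ ν ∈ Icc 1 μ, (ν : ℝ) ^ ((1 - e) * (p - 1)) * b ν ^ p := by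
  have holder := rpow_inner_le_weight_mul_Lp_of_nonneg (Icc 1 μ) hp (fun ν => (ν : ℝ) ^ (e - 1))
    (fun ν => (ν : ℝ) ^ (1 - e) * b ν) (fun ν => by positivity)
    (fun ν => mul_nonneg (by positivity) (hb ν))
  calc (∑ ν ∈ Icc 1 μ, b ν) ^ p
      = (∑ ν ∈ Icc 1 μ, (ν : ℝ) ^ (e - 1) * ((ν : ℝ) ^ (1 - e) * b ν)) ^ p := by
        congr 1
        refine sum_congr rfl fun ν hν => ?_
        have hν₀ : (0 : ℝ) < ν := by exact_mod_cast (mem_Icc.1 hν).1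
        rw [← mul_assoc, ← rpow_add hν₀, sub_add_sub_cancel', sub_self, rpow_zero, one_mul]
    _ ≤ (∑ ν ∈ Icc 1 μ, (ν : ℝ) ^ (e - 1)) ^ (p - 1) *
          ∑ ν ∈ Icc 1 μ, (ν : ℝ) ^ (e - 1) * ((ν : ℝ) ^ (1 - e) * b ν) ^ p := holder
    _ ≤ ((μ : ℝ) ^ e / e) ^ (p - 1) *
          ∑ ν ∈ Icc 1 μ, (ν : ℝ) ^ (e - 1) * ((ν : ℝ) ^ (1 - e) * b ν) ^ p := by
        refine mul_le_mul_of_nonneg_right ?_ (sum_nonneg fun ν _ => mul_nonneg (by positivity)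
          (rpow_nonneg (mul_nonneg (by positivity) (hb ν)) p))
        exact rpow_le_rpow (sum_nonneg fun ν _ => by positivity) (sum_Icc_rpow_sub_one_le he₀ he₁ μ)
          (by linarith)
    _ = ((μ : ℝ) ^ e / e) ^ (p - 1) * ∑ ν ∈ Icc 1 μ, (ν : ℝ) ^ ((1 - e) * (p - 1)) * b ν ^ p := by
        congr 1
        refine sum_congr rfl fun ν hν => ?_
        have hν₀ : (0 : ℝ) < ν := by exact_mod_cast (mem_Icc.1 hν).1
        rw [mul_rpow (by positivity) (hb ν), ← rpow_mul hν₀.le, ← mul_assoc, ← rpow_add hν₀]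
        ring_nf

theorem hardy_inequality {α p : ℝ} (hα : 0 < α) (hp : 1 ≤ p) :
    ∃ C, 0 < C ∧ ∀ b : ℕ → ℝ, (∀ ν, 0 ≤ b ν) → ∀ n : ℕ,
      ∑ μ ∈ Icc 1 n, (μ : ℝ) ^ (-α - 1) * (∑ ν ∈ Icc 1 μ, b ν) ^ p ≤
        C * ∑ ν ∈ Icc 1 n, (ν : ℝ) ^ (p - 1 - α) * b ν ^ p := by
  set e := α / (α + p)
  set β := α - e * (p - 1)
  have he₀ : 0 < e := by positivity
  have he₁ : e ≤ 1 := div_le_one_of_le₀ (by linarith) (by positivity)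
  have hβ : 0 < β := by
    have : e * (p - 1) < α := by
      rw [div_mul_eq_mul_div, div_lt_iff₀ (by positivity)]
      nlinarith
    linarith
  refine ⟨e ^ (1 - p) * (1 + 1 / β), by positivity, fun b hb n => ?_⟩
  set c : ℕ → ℝ := fun ν => (ν : ℝ) ^ ((1 - e) * (p - 1)) * b ν ^ p
  have hc : ∀ ν, 0 ≤ c ν := fun ν => mul_nonneg (by positivity) (rpow_nonneg (hb ν) p)
  calc ∑ μ ∈ Icc 1 n, (μ : ℝ) ^ (-α - 1) * (∑ ν ∈ Icc 1 μ, b ν) ^ p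
      ≤ ∑ μ ∈ Icc 1 n, e ^ (1 - p) * ((μ : ℝ) ^ (-β - 1) * ∑ ν ∈ Icc 1 μ, c ν) := by
        refine sum_le_sum fun μ hμ => ?_
        have hμ₀ : (0 : ℝ) < μ := by exact_mod_cast (mem_Icc.1 hμ).1
        calc (μ : ℝ) ^ (-α - 1) * (∑ ν ∈ Icc 1 μ, b ν) ^ p
            ≤ (μ : ℝ) ^ (-α - 1) * (((μ : ℝ) ^ e / e) ^ (p - 1) * ∑ ν ∈ Icc 1 μ, c ν) := by
              gcongr
              exact rpow_sum_Icc_le he₀ he₁ hp hb μ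
          _ = e ^ (1 - p) * ((μ : ℝ) ^ (-β - 1) * ∑ ν ∈ Icc 1 μ, c ν) := by
              rw [div_rpow (by positivity) he₀.le, ← rpow_mul hμ₀.le, ← neg_sub p 1,
                rpow_neg he₀.le, show -β - 1 = -α - 1 + e * (p - 1) by ring, rpow_add hμ₀]
              field_simp
    _ = e ^ (1 - p) * ∑ ν ∈ Icc 1 n, c ν * ∑ μ ∈ Icc ν n, (μ : ℝ) ^ (-β - 1) := by
        rw [← mul_sum]
        congr 1
        simp_rw [mul_sum]
        rw [sum_comm' (t' := Icc 1 n) (s' := fun ν => Icc ν n)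
          (fun μ ν => by simp only [mem_Icc]; omega)]
        exact sum_congr rfl fun _ _ => sum_congr rfl fun _ _ => mul_comm _ _
    _ ≤ e ^ (1 - p) * ∑ ν ∈ Icc 1 n, c ν * ((1 + 1 / β) * (ν : ℝ) ^ (-β)) := by
        gcongr with ν hν
        · exact hc ν
        · exact sum_Icc_rpow_neg_sub_one_le hβ (mem_Icc.1 hν).1 n
    _ = e ^ (1 - p) * (1 + 1 / β) * ∑ ν ∈ Icc 1 n, (ν : ℝ) ^ (p - 1 - α) * b ν ^ p := by
        rw [mul_assoc]
        congr 1
        rw [mul_sum]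
        refine sum_congr rfl fun ν hν => ?_
        have hν₀ : (0 : ℝ) < ν := by exact_mod_cast (mem_Icc.1 hν).1
        rw [show p - 1 - α = (1 - e) * (p - 1) + -β by ring, rpow_add hν₀]
        ring

theorem stmt_15 (α lam p : ℝ) (hα : 0 < α) (hp : 1 ≤ p) :
    ∃ C₁ C₂ : ℝ, 0 < C₁ ∧ 0 < C₂ ∧ ∀ a : ℕ → ℝ, (∀ ν, 0 ≤ a ν) → (∀ ν, a (ν + 1) ≤ a ν) →
      ∀ n : ℕ, 1 ≤ n →
        C₁ * ∑ μ ∈ Icc 1 n, (μ : ℝ) ^ (-α - 1) * (a μ * (μ : ℝ) ^ (lam + 1)) ^ p ≤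
          ∑ μ ∈ Icc 1 n, (μ : ℝ) ^ (-α - 1) * (∑ ν ∈ Icc 1 μ, a ν * (ν : ℝ) ^ lam) ^ p ∧
        ∑ μ ∈ Icc 1 n, (μ : ℝ) ^ (-α - 1) * (∑ ν ∈ Icc 1 μ, a ν * (ν : ℝ) ^ lam) ^ p ≤
          C₂ * ∑ μ ∈ Icc 1 n, (μ : ℝ) ^ (-α - 1) * (a μ * (μ : ℝ) ^ (lam + 1)) ^ p := by
  obtain ⟨C, hC, hardy⟩ := hardy_inequality hα hp
  refine ⟨(1 + |lam|) ^ (-p), C, by positivity, hC, fun a ha hmono n _ => ⟨?_, ?_⟩⟩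
  · exact reverse_hardy_inequality ha (antitone_nat_of_succ_le hmono) α lam (by linarith) n
  calc ∑ μ ∈ Icc 1 n, (μ : ℝ) ^ (-α - 1) * (∑ ν ∈ Icc 1 μ, a ν * (ν : ℝ) ^ lam) ^ p
      ≤ C * ∑ ν ∈ Icc 1 n, (ν : ℝ) ^ (p - 1 - α) * (a ν * (ν : ℝ) ^ lam) ^ p :=
        hardy (fun ν => a ν * (ν : ℝ) ^ lam) (fun ν => mul_nonneg (ha ν) (by positivity)) n
    _ = C * ∑ μ ∈ Icc 1 n, (μ : ℝ) ^ (-α - 1) * (a μ * (μ : ℝ) ^ (lam + 1)) ^ p := by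
        congr 1
        refine sum_congr rfl fun ν hν => ?_
        have hν₀ : (0 : ℝ) < ν := by exact_mod_cast (mem_Icc.1 hν).1
        rw [rpow_add_one hν₀.ne', ← mul_assoc, mul_rpow (mul_nonneg (ha ν) (by positivity)) hν₀.le,
          show p - 1 - α = -α - 1 + p by ring, rpow_add hν₀]
        ring
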